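/- Let λ, h, f : [0, T) → ℝ solve the cylinder soliton ODE system (λ > 0, λ' = −1 + λh², h' = h/λ − (3/2)h³, f' = (1/2)h²f) with λ(0) = 1 and 0 < h(0)² < 1/2. Then T ≤ 2. -/

import Mathlib

/-!
Along the flow, `(λh²)' = 2h²(1/2 - λh²)`, so `w = 1/2 - λh²` solves the linear equation
`w' = -2h² w` and keeps the sign of `w(0) = 1/2 - h(0)² > 0`. Hence `λ' = -1 + λh² < -1/2`,
so `λ(t) < 1 - t/2`, and `λ` would vanish by time `2`.
-/

open Set Real

theorem HasDerivWithinAt.Ici_of_Ico {f : ℝ → ℝ} {f' a b x : ℝ}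
    (hf : HasDerivWithinAt f f' (Ico a b) x) (hx : x ∈ Ico a b) :
    HasDerivWithinAt f f' (Ici x) x :=
  hf.mono_of_mem_nhdsWithin <|
    Filter.mem_of_superset (Ico_mem_nhdsGE hx.2) (Ico_subset_Ico_left hx.1)

theorem continuousOn_Icc_of_hasDerivWithinAt_Ico {f f' : ℝ → ℝ} {a b c : ℝ}
    (hf : ∀ x ∈ Ico a b, HasDerivWithinAt f (f' x) (Ico a b) x) (hc : c < b) :
    ContinuousOn f (Icc a c) :=
  ContinuousOn.mono (fun x hx => (hf x hx).continuousWithinAt) (Icc_subset_Ico_right hc)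

theorem pos_of_hasDerivWithinAt_mul_self {a b : ℝ} {c w : ℝ → ℝ}
    (hc : ContinuousOn c (Icc a b)) (hw : ContinuousOn w (Icc a b))
    (hw' : ∀ x ∈ Ico a b, HasDerivWithinAt w (c x * w x) (Ici x) x) (ha : 0 < w a) :
    ∀ x ∈ Icc a b, 0 < w x := by
  obtain ⟨K, hK⟩ := isCompact_Icc.exists_bound_of_continuousOn hc
  -- Since `|c| ≤ K`, the barrier `w a * exp (-(K + 1) (t - a))` decays strictly faster than `w`
  -- wherever they meet, so it stays below `w`.
  set B : ℝ → ℝ := fun t => w a * exp (-(K + 1) * (t - a))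
  have hB_pos : ∀ t, 0 < B t := fun t => mul_pos ha (exp_pos _)
  have hB' : ∀ t, HasDerivAt B (-(K + 1) * B t) t := by
    intro t
    refine ((((hasDerivAt_id t).sub_const a).const_mul _).exp.const_mul (w a)).congr_deriv ?_
    simp only [B, id, mul_one]
    ring
  have hB_le : ∀ x ∈ Icc a b, B x ≤ w x := by
    refine image_le_of_deriv_right_lt_deriv_boundary'
      (fun t _ => (hB' t).continuousAt.continuousWithinAt) (fun t _ => (hB' t).hasDerivWithinAt)
      (by simp [B]) hw hw' ?_
    intro x hx hBw
    have hcx : -K ≤ c x := neg_le_of_abs_le (hK x (Ico_subset_Icc_self hx))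
    rw [← hBw]
    nlinarith [hB_pos x]
  exact fun x hx => (hB_pos x).trans_le (hB_le x hx)

structure IsCylinderSoliton (T : ℝ) (lam h : ℝ → ℝ) : Prop where
  pos : ∀ t ∈ Ico 0 T, 0 < lam t
  hasDerivWithinAt_lam : ∀ t ∈ Ico 0 T,
    HasDerivWithinAt lam (-1 + lam t * h t ^ 2) (Ico 0 T) t
  hasDerivWithinAt_h : ∀ t ∈ Ico 0 T,
    HasDerivWithinAt h (h t / lam t - 3 / 2 * h t ^ 3) (Ico 0 T) t

theorem hasDerivWithinAt_half_sub_mul_sq {lam h : ℝ → ℝ} {s : Set ℝ} {x : ℝ}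
    (hlam : HasDerivWithinAt lam (-1 + lam x * h x ^ 2) s x)
    (hh : HasDerivWithinAt h (h x / lam x - 3 / 2 * h x ^ 3) s x) (hx : lam x ≠ 0) :
    HasDerivWithinAt (fun t => 1 / 2 - lam t * h t ^ 2)
      (-2 * h x ^ 2 * (1 / 2 - lam x * h x ^ 2)) s x := by
  refine ((hlam.mul (hh.fun_pow 2)).const_sub (1 / 2)).congr_deriv ?_
  field_simp
  ring

namespace IsCylinderSoliton

variable {T b : ℝ} {lam h : ℝ → ℝ}

theorem lam_mul_sq_lt_half (hs : IsCylinderSoliton T lam h) (h0 : lam 0 * h 0 ^ 2 < 1 / 2)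
    (hb : b < T) : ∀ x ∈ Icc 0 b, lam x * h x ^ 2 < 1 / 2 := by
  have hlamC := continuousOn_Icc_of_hasDerivWithinAt_Ico hs.hasDerivWithinAt_lam hb
  have hhC := continuousOn_Icc_of_hasDerivWithinAt_Ico hs.hasDerivWithinAt_h hb
  have hw' : ∀ x ∈ Ico 0 b, HasDerivWithinAt (fun t => 1 / 2 - lam t * h t ^ 2)
      (-2 * h x ^ 2 * (1 / 2 - lam x * h x ^ 2)) (Ici x) x := fun x hx => by
    have hx' : x ∈ Ico 0 T := ⟨hx.1, hx.2.trans hb⟩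
    exact (hasDerivWithinAt_half_sub_mul_sq (hs.hasDerivWithinAt_lam x hx')
      (hs.hasDerivWithinAt_h x hx') (hs.pos x hx').ne').Ici_of_Ico hx'
  have hw := pos_of_hasDerivWithinAt_mul_self (continuousOn_const.mul (hhC.pow 2))
    (continuousOn_const.sub (hlamC.mul (hhC.pow 2))) hw' (by simpa using h0)
  exact fun x hx => sub_pos.1 (hw x hx)

theorem lam_le_sub_half (hs : IsCylinderSoliton T lam h) (h0 : lam 0 * h 0 ^ 2 < 1 / 2)
    (hb : b < T) (hb₀ : 0 ≤ b) : lam b ≤ lam 0 - b / 2 := by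
  have hB : ∀ t, HasDerivAt (fun t => lam 0 - t / 2) (-(1 / 2)) t := fun t => by
    simpa using ((hasDerivAt_id t).div_const 2).const_sub (lam 0)
  refine image_le_of_deriv_right_lt_deriv_boundary
    (continuousOn_Icc_of_hasDerivWithinAt_Ico hs.hasDerivWithinAt_lam hb)
    (fun x hx => (hs.hasDerivWithinAt_lam x ⟨hx.1, hx.2.trans hb⟩).Ici_of_Ico
      ⟨hx.1, hx.2.trans hb⟩) (by simp) hB (fun x hx _ => ?_) ⟨hb₀, le_rfl⟩
  linarith [hs.lam_mul_sq_lt_half h0 hb x (Ico_subset_Icc_self hx)]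

end IsCylinderSoliton

theorem stmt_15_general (T : ℝ) (lam h : ℝ → ℝ)
    (hpos : ∀ t ∈ Set.Ico (0 : ℝ) T, 0 < lam t)
    (hlam : ∀ t ∈ Set.Ico (0 : ℝ) T,
      HasDerivWithinAt lam (-1 + lam t * (h t) ^ 2) (Set.Ico 0 T) t)
    (hh : ∀ t ∈ Set.Ico (0 : ℝ) T,
      HasDerivWithinAt h (h t / lam t - (3 / 2) * (h t) ^ 3) (Set.Ico 0 T) t)
    (hlam0 : lam 0 = 1) (hh0' : (h 0) ^ 2 < 1 / 2) :
    T ≤ 2 := by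
  by_contra! hT
  have hs : IsCylinderSoliton T lam h := ⟨hpos, hlam, hh⟩
  have hlam2 := hs.lam_le_sub_half (by rwa [hlam0, one_mul]) hT zero_le_two
  have := hpos 2 ⟨zero_le_two, hT⟩
  rw [hlam0] at hlam2
  linarith

/-- If the cylinder soliton ODE system has a solution on `[0, T)` with `λ(0) = 1`
and `0 < h(0)² < 1/2`, then `T ≤ 2`. -/
theorem stmt_15 (T : ℝ) (lam h f : ℝ → ℝ)
    (hpos : ∀ t ∈ Set.Ico (0 : ℝ) T, 0 < lam t)
    (hlam : ∀ t ∈ Set.Ico (0 : ℝ) T,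
      HasDerivWithinAt lam (-1 + lam t * (h t) ^ 2) (Set.Ico 0 T) t)
    (hh : ∀ t ∈ Set.Ico (0 : ℝ) T,
      HasDerivWithinAt h (h t / lam t - (3 / 2) * (h t) ^ 3) (Set.Ico 0 T) t)
    (hf : ∀ t ∈ Set.Ico (0 : ℝ) T,
      HasDerivWithinAt f ((1 / 2) * (h t) ^ 2 * f t) (Set.Ico 0 T) t)
    (hlam0 : lam 0 = 1) (hh0 : 0 < (h 0) ^ 2) (hh0' : (h 0) ^ 2 < 1 / 2) :
    T ≤ 2 :=
  stmt_15_general T lam h hpos hlam hh hlam0 hh0'
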